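/- arXiv:1610.09408 — 2 statements merged into one kernel-verified Lean document; each statement's English description precedes it below -/
import Mathlib

section
/- For every i ∈ ℤ the adapted basis satisfies the finite-band multiplicative relation Ψ⁺_i = γ • (x · Σ_j Q⁺_{ij} Ψ⁺_j), where the sum is over the finitely many j with Q⁺_{ij} ≠ 0 (all such j satisfy i−1 ≤ j ≤ i−1+LM). (This is the componentwise form of the infinite system (γx)⁻¹ Ψ⃗⁺ = Q⁺ Ψ⃗⁺ with constant finite-band matrix Q⁺.) -/
open Polynomial

/-- The Euler operator `D = x d/dx` on formal Laurent series: `(D f)_n = n • f_n`. -/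
noncomputable def eulerD (R : Type*) [CommRing R] : Module.End R (LaurentSeries R) where
  toFun f :=
    { coeff := fun n => n • f.coeff n
      isPWO_support' := f.isPWO_support'.mono (fun n hn => by
        simp only [Function.mem_support, ne_eq] at hn ⊢
        exact fun h => hn (by rw [h, smul_zero])) }
  map_add' f g := by
    ext n
    simp [smul_add]
  map_smul' r f := by
    ext n
    simp only [HahnSeries.coeff_smul, RingHom.id_apply, zsmul_eq_mul, smul_eq_mul]
    ring

/-- Multiplication by a fixed Laurent series `u`, as an `R`-linear endomorphism. -/
noncomputable def mulOp (R : Type*) [CommRing R] (u : LaurentSeries R) :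
    Module.End R (LaurentSeries R) where
  toFun f := u * f
  map_add' f g := mul_add u f g
  map_smul' r f := by
    simp only [RingHom.id_apply]
    rw [← HahnSeries.C_mul_eq_smul, ← HahnSeries.C_mul_eq_smul, mul_left_comm]

/-- Multiplication by `x` on formal Laurent series. -/
noncomputable def mulX (R : Type*) [CommRing R] : Module.End R (LaurentSeries R) :=
  mulOp R (HahnSeries.single (1 : ℤ) (1 : R))

/-- The recursion operator `R₊ = γ x G(β D)`. -/
noncomputable def Rplus (R : Type*) [CommRing R] (β γ : R) (G : R[X]) :
    Module.End R (LaurentSeries R) :=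
  γ • (mulX R ∘ₗ Polynomial.aeval (β • eulerD R) G)

/-- The recursion operator `R₋ = γ x G(−β D)`. -/
noncomputable def Rminus (R : Type*) [CommRing R] (β γ : R) (G : R[X]) :
    Module.End R (LaurentSeries R) :=
  γ • (mulX R ∘ₗ Polynomial.aeval ((-β) • eulerD R) G)


/-- The polynomial `S(r) = Σ_{k=1}^L k s_k r^k`, as a (Laurent) series in `r`. -/
noncomputable def Spoly (R : Type*) [CommRing R] (L : ℕ) (s : ℕ → R) : LaurentSeries R :=
  ∑ k ∈ Finset.Icc 1 L, ((k : R) * s k) • HahnSeries.single (k : ℤ) (1 : R)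

/-- The operator `V₊ = G(Δ₊)` with `Δ₊ = S(r) + β D_r`. -/
noncomputable def Vplus (R : Type*) [CommRing R] (β : R) (G : Polynomial R) (L : ℕ)
    (s : ℕ → R) : Module.End R (LaurentSeries R) :=
  Polynomial.aeval (mulOp R (Spoly R L s) + β • eulerD R) G

/-- The matrix entry `Q⁺_{ij}`: the coefficient of `r^j` in `V₊(r^{i−1})`. -/
noncomputable def Qplus (R : Type*) [CommRing R] (β : R) (G : Polynomial R) (L : ℕ)
    (s : ℕ → R) (i j : ℤ) : R :=
  (Vplus R β G L s (HahnSeries.single (i - 1) (1 : R))).coeff j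

/-! Write `H = Σ hₙ xⁿ`. The recurrence for `h` says exactly `β D H = S H`, and `D` is a
derivation, so multiplication by `H` intertwines `Δ₊ = S + β D` with `β D`:
`β D (H f) = H Δ₊ f`. Hence `H · V₊(x^{i-1}) = G(β D)(x^{i-1} H)`, and since `β D` acts on `xᵐ`
by the scalar `mβ`, comparing coefficients of `xᵐ` gives `Σⱼ Q⁺ᵢⱼ h_{m-j} = G(mβ) h_{m-i+1}`.
With `m = n - 1` and `ρ_{n-1} = γ G((n-1)β) ρ_{n-2}` this is the coefficient of `xⁿ` in the
relation. The band comes from `Δ₊` raising the top degree by at most `L` and never lowering the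
bottom one. -/

theorem Module.End.aeval_comp_of_comp_eq {R M N : Type*} [CommRing R] [AddCommGroup M]
    [Module R M] [AddCommGroup N] [Module R N] {T : M →ₗ[R] N} {A : Module.End R M}
    {B : Module.End R N} (h : B ∘ₗ T = T ∘ₗ A) (G : R[X]) :
    aeval B G ∘ₗ T = T ∘ₗ aeval A G := by
  ext x
  simp only [LinearMap.comp_apply, aeval_eq_sum_range, LinearMap.sum_apply, map_sum,
    LinearMap.smul_apply, map_smul]
  exact Finset.sum_congr rfl fun k _ =>
    congrArg _ (LinearMap.congr_fun (Module.End.commute_pow_left_of_commute h k) x)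

section EulerOperator

variable {R : Type*} [CommRing R]

theorem eulerD_coeff (f : LaurentSeries R) (n : ℤ) : (eulerD R f).coeff n = n * f.coeff n :=
  zsmul_eq_mul _ _

theorem support_eulerD_subset (f : LaurentSeries R) : (eulerD R f).support ⊆ f.support :=
  fun n hn hf => hn (by rw [eulerD_coeff, hf, mul_zero])

theorem eulerD_mul (f g : LaurentSeries R) :
    eulerD R (f * g) = eulerD R f * g + f * eulerD R g := by
  ext n
  rw [HahnSeries.coeff_add, eulerD_coeff, HahnSeries.coeff_mul,
    HahnSeries.coeff_mul_left' f.isPWO_support (support_eulerD_subset f),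
    HahnSeries.coeff_mul_right' g.isPWO_support (support_eulerD_subset g),
    Finset.mul_sum, ← Finset.sum_add_distrib]
  refine Finset.sum_congr rfl fun ij hij => ?_
  obtain ⟨-, -, hn⟩ := Finset.mem_antidiagonal.mp hij
  rw [eulerD_coeff, eulerD_coeff, ← hn, Int.cast_add]
  ring

theorem coeff_aeval_smul_eulerD (β : R) (G : R[X]) (f : LaurentSeries R) (n : ℤ) :
    (aeval (β • eulerD R) G f).coeff n = G.eval ((n : R) * β) * f.coeff n := by
  have hpow (p : ℕ) : (((β • eulerD R) ^ p) f).coeff n = ((n : R) * β) ^ p * f.coeff n := by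
    induction p with
    | zero => simp
    | succ p ih =>
      rw [pow_succ', Module.End.mul_apply, LinearMap.smul_apply, HahnSeries.coeff_smul,
        eulerD_coeff, ih, smul_eq_mul]
      ring
  rw [aeval_eq_sum_range, LinearMap.sum_apply, HahnSeries.coeff_sum, eval_eq_sum_range,
    Finset.sum_mul]
  refine Finset.sum_congr rfl fun p _ => ?_
  rw [LinearMap.smul_apply, HahnSeries.coeff_smul, hpow, smul_eq_mul, mul_assoc]

theorem coeff_Spoly_mul (L : ℕ) (s : ℕ → R) (f : LaurentSeries R) (n : ℤ) :
    (Spoly R L s * f).coeff n = ∑ k ∈ Finset.Icc 1 L, (k : R) * s k * f.coeff (n - k) := by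
  rw [Spoly, Finset.sum_mul, HahnSeries.coeff_sum]
  refine Finset.sum_congr rfl fun k _ => ?_
  rw [← HahnSeries.C_mul_eq_smul, mul_assoc, HahnSeries.C_mul_eq_smul, HahnSeries.coeff_smul,
    HahnSeries.coeff_single_mul, smul_eq_mul, one_mul]

theorem smul_eulerD_eq_Spoly_mul (β : R) (L : ℕ) (s : ℕ → R) {H : LaurentSeries R}
    (hneg : ∀ n : ℤ, n < 0 → H.coeff n = 0)
    (hrec : ∀ n : ℤ, 1 ≤ n →
      β * n * H.coeff n = ∑ k ∈ Finset.Icc 1 L, (k : R) * s k * H.coeff (n - k)) :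
    β • eulerD R H = Spoly R L s * H := by
  ext n
  rw [HahnSeries.coeff_smul, eulerD_coeff, coeff_Spoly_mul, smul_eq_mul, ← mul_assoc]
  rcases le_or_gt 1 n with hn | hn
  · exact hrec n hn
  · have hterm : ∀ k ∈ Finset.Icc 1 L, (k : R) * s k * H.coeff (n - k) = 0 := fun k hk => by
      rw [hneg _ (by have := (Finset.mem_Icc.mp hk).1; omega), mul_zero]
    rw [Finset.sum_eq_zero hterm]
    rcases (show n ≤ 0 by omega).lt_or_eq with hn | rfl
    · rw [hneg n hn, mul_zero]
    · simp

end EulerOperator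

namespace LaurentSeries

variable {R : Type*} [CommRing R]

variable (R) in
def supported (s : Set ℤ) : Submodule R (LaurentSeries R) where
  carrier := {f | f.support ⊆ s}
  add_mem' hf hg := (HahnSeries.support_add_subset _ _).trans (Set.union_subset hf hg)
  zero_mem' := by simp
  smul_mem' c f hf := (HahnSeries.support_smul_subset c f).trans hf

theorem supported_mono {s t : Set ℤ} (hst : s ⊆ t) : supported R s ≤ supported R t :=
  fun _ hf => hf.trans hst

theorem single_mem_supported (a : ℤ) (r : R) : HahnSeries.single a r ∈ supported R {a} :=
  HahnSeries.support_single_subset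

theorem eulerD_mem_supported {s : Set ℤ} {f : LaurentSeries R} (hf : f ∈ supported R s) :
    eulerD R f ∈ supported R s :=
  (support_eulerD_subset f).trans hf

theorem Spoly_mul_mem_supported (L : ℕ) (s : ℕ → R) {a b : ℤ} {f : LaurentSeries R}
    (hf : f ∈ supported R (Set.Icc a b)) :
    Spoly R L s * f ∈ supported R (Set.Icc a (b + L)) := by
  intro n hn
  rw [HahnSeries.mem_support, coeff_Spoly_mul] at hn
  obtain ⟨k, hk, hkn⟩ := Finset.exists_ne_zero_of_sum_ne_zero hn
  obtain ⟨hak, hkb⟩ := hf (right_ne_zero_of_mul hkn)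
  obtain ⟨hk1, hkL⟩ := Finset.mem_Icc.mp hk
  constructor <;> omega

theorem coeff_mul_eq_sum_of_mem_supported {a b : ℤ} {f : LaurentSeries R}
    (hf : f ∈ supported R (Set.Icc a b)) (g : LaurentSeries R) (n : ℤ) :
    (f * g).coeff n = ∑ j ∈ Finset.Icc a b, f.coeff j * g.coeff (n - j) := by
  have hf_eq : f = ∑ j ∈ Finset.Icc a b, HahnSeries.single j (f.coeff j) := by
    ext n
    rw [HahnSeries.coeff_sum]
    by_cases hn : n ∈ Finset.Icc a b
    · rw [Finset.sum_eq_single_of_mem n hn fun j _ hjn => HahnSeries.coeff_single_of_ne hjn.symm,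
        HahnSeries.coeff_single_same]
    · rw [Finset.sum_eq_zero fun j hj =>
        HahnSeries.coeff_single_of_ne (ne_of_mem_of_not_mem hj hn).symm]
      exact of_not_not fun hne => hn (Finset.mem_Icc.mpr (hf hne))
  conv_lhs => rw [hf_eq]
  rw [Finset.sum_mul, HahnSeries.coeff_sum]
  simp only [HahnSeries.coeff_single_mul]

end LaurentSeries

open LaurentSeries

section Vplus

variable {R : Type*} [CommRing R] (β : R) (L : ℕ) (s : ℕ → R)

variable (R) in
noncomputable def deltaPlus : Module.End R (LaurentSeries R) :=
  mulOp R (Spoly R L s) + β • eulerD R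

theorem Vplus_eq_aeval_deltaPlus (G : R[X]) : Vplus R β G L s = aeval (deltaPlus R β L s) G :=
  rfl

theorem deltaPlus_mem_supported {a b : ℤ} {f : LaurentSeries R}
    (hf : f ∈ supported R (Set.Icc a b)) :
    deltaPlus R β L s f ∈ supported R (Set.Icc a (b + L)) :=
  add_mem (Spoly_mul_mem_supported L s hf)
    (Submodule.smul_mem _ β (supported_mono (Set.Icc_subset_Icc le_rfl (by omega))
      (eulerD_mem_supported hf)))

theorem pow_deltaPlus_single_mem_supported (a : ℤ) (r : R) (p : ℕ) :
    (deltaPlus R β L s ^ p) (HahnSeries.single a r) ∈ supported R (Set.Icc a (a + p * L)) := by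
  induction p with
  | zero => simpa using single_mem_supported a r
  | succ p ih =>
    rw [pow_succ', Module.End.mul_apply]
    convert deltaPlus_mem_supported β L s ih using 3
    push_cast
    ring

theorem Vplus_single_mem_supported (G : R[X]) (a : ℤ) (r : R) :
    Vplus R β G L s (HahnSeries.single a r) ∈
      supported R (Set.Icc a (a + L * G.natDegree)) := by
  rw [Vplus_eq_aeval_deltaPlus, aeval_eq_sum_range, LinearMap.sum_apply]
  refine Submodule.sum_mem _ fun p hp => Submodule.smul_mem _ _ ?_
  refine supported_mono (Set.Icc_subset_Icc le_rfl ?_)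
    (pow_deltaPlus_single_mem_supported β L s a r p)
  have hp : (p : ℤ) ≤ G.natDegree := by exact_mod_cast Finset.mem_range_succ_iff.mp hp
  nlinarith

theorem mulOp_intertwines_deltaPlus {H : LaurentSeries R}
    (hH : β • eulerD R H = Spoly R L s * H) :
    (β • eulerD R) ∘ₗ mulOp R H = mulOp R H ∘ₗ deltaPlus R β L s := by
  ext f : 1
  show β • eulerD R (H * f) = H * (Spoly R L s * f + β • eulerD R f)
  rw [← HahnSeries.C_mul_eq_smul] at hH
  rw [eulerD_mul, ← HahnSeries.C_mul_eq_smul, ← HahnSeries.C_mul_eq_smul]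
  linear_combination f * hH

theorem sum_Qplus_mul_coeff (G : R[X]) {H : LaurentSeries R}
    (hH : β • eulerD R H = Spoly R L s * H) (i m : ℤ) :
    ∑ j ∈ Finset.Icc (i - 1) (i - 1 + L * G.natDegree), Qplus R β G L s i j * H.coeff (m - j) =
      G.eval (m * β) * H.coeff (m - (i - 1)) := by
  have hcomm := LinearMap.congr_fun
    (Module.End.aeval_comp_of_comp_eq (mulOp_intertwines_deltaPlus β L s hH) G)
    (HahnSeries.single (i - 1) 1)
  calc _ = (Vplus R β G L s (HahnSeries.single (i - 1) 1) * H).coeff m :=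
        (coeff_mul_eq_sum_of_mem_supported (Vplus_single_mem_supported β L s G _ _) H m).symm
    _ = (aeval (β • eulerD R) G (H * HahnSeries.single (i - 1) 1)).coeff m := by
        rw [mul_comm]
        exact congrArg (HahnSeries.coeff · m) hcomm.symm
    _ = G.eval (m * β) * H.coeff (m - (i - 1)) := by
        rw [coeff_aeval_smul_eulerD, mul_comm H, HahnSeries.coeff_single_mul, one_mul]

end Vplus

theorem adapted_basis_plus_multiplicative_system_general (R : Type*) [CommRing R] (β γ : R)
    (G : Polynomial R)
    (ρ : ℤ → Rˣ)
    (hρ : ∀ n : ℤ, (ρ n : R) = γ * G.eval ((n : R) * β) * (ρ (n - 1) : R))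
    (L : ℕ) (s : ℕ → R)
    (h : ℤ → R) (hneg : ∀ n : ℤ, n < 0 → h n = 0)
    (hrec : ∀ n : ℤ, 1 ≤ n →
      β * (n : R) * h n = ∑ k ∈ Finset.Icc 1 L, (k : R) * s k * h (n - (k : ℤ)))
    (Ψp : ℤ → LaurentSeries R)
    (hΨ : ∀ k n : ℤ, (Ψp k).coeff n = γ * (ρ (n - 1) : R) * h (n - k)) :
    ∀ i : ℤ,
      (∀ j : ℤ, Qplus R β G L s i j ≠ 0 →
        i - 1 ≤ j ∧ j ≤ i - 1 + (L : ℤ) * (G.natDegree : ℤ)) ∧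
      Ψp i = γ • (HahnSeries.single (1 : ℤ) (1 : R) *
        ∑ j ∈ Finset.Icc (i - 1) (i - 1 + (L : ℤ) * (G.natDegree : ℤ)),
          Qplus R β G L s i j • Ψp j) := by
  intro i
  let H : LaurentSeries R := HahnSeries.ofSuppBddBelow h
    ⟨0, fun n hn => not_lt.mp fun hlt => hn (hneg n hlt)⟩
  have hH : β • eulerD R H = Spoly R L s * H := smul_eulerD_eq_Spoly_mul β L s hneg hrec
  refine ⟨fun j hj => Vplus_single_mem_supported β L s G (i - 1) 1 hj, ?_⟩
  ext n
  have hsum : ∑ j ∈ Finset.Icc (i - 1) (i - 1 + L * G.natDegree),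
      Qplus R β G L s i j * h (n - 1 - j) = G.eval ((n - 1 : ℤ) * β) * h (n - 1 - (i - 1)) :=
    sum_Qplus_mul_coeff β L s G hH i (n - 1)
  rw [sub_sub_sub_cancel_right] at hsum
  rw [HahnSeries.coeff_smul, HahnSeries.coeff_single_mul, HahnSeries.coeff_sum, hΨ, hρ (n - 1),
    smul_eq_mul, one_mul]
  simp only [HahnSeries.coeff_smul, hΨ, smul_eq_mul]
  simp_rw [mul_left_comm (Qplus R β G L s i _), ← Finset.mul_sum, hsum]
  ring

/-- the finite-band multiplicative relation
`Ψ⁺_i = γ • (x · Σ_j Q⁺_{ij} Ψ⁺_j)`, with `Q⁺_{ij} ≠ 0` only for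
`i−1 ≤ j ≤ i−1+LM` (componentwise form of `(γx)⁻¹ Ψ⃗⁺ = Q⁺ Ψ⃗⁺`). -/
theorem adapted_basis_plus_multiplicative_system (R : Type*) [CommRing R] (β γ : R)
    (G : Polynomial R) (hG : G.coeff 0 = 1)
    (ρ : ℤ → Rˣ) (hρ0 : ρ 0 = 1)
    (hρ : ∀ n : ℤ, (ρ n : R) = γ * G.eval ((n : R) * β) * (ρ (n - 1) : R))
    (L : ℕ) (hL : 1 ≤ L) (s : ℕ → R)
    (h : ℤ → R) (h0 : h 0 = 1) (hneg : ∀ n : ℤ, n < 0 → h n = 0)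
    (hrec : ∀ n : ℤ, 1 ≤ n →
      β * (n : R) * h n = ∑ k ∈ Finset.Icc 1 L, (k : R) * s k * h (n - (k : ℤ)))
    (Ψp : ℤ → LaurentSeries R)
    (hΨ : ∀ k n : ℤ, (Ψp k).coeff n = γ * (ρ (n - 1) : R) * h (n - k)) :
    ∀ i : ℤ,
      (∀ j : ℤ, Qplus R β G L s i j ≠ 0 →
        i - 1 ≤ j ∧ j ≤ i - 1 + (L : ℤ) * (G.natDegree : ℤ)) ∧
      Ψp i = γ • (HahnSeries.single (1 : ℤ) (1 : R) *
        ∑ j ∈ Finset.Icc (i - 1) (i - 1 + (L : ℤ) * (G.natDegree : ℤ)),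
          Qplus R β G L s i j • Ψp j) :=
  adapted_basis_plus_multiplicative_system_general R β γ G ρ hρ L s h hneg hrec Ψp hΨ
end

section
/- The recursion operator R₋ is the conjugate of multiplication by x by the diagonal operator determined by the negative-index content-product coefficients: R₋ = C̃⁻¹ ∘ M_x ∘ C̃ as R-linear endomorphisms of formal Laurent series, where C̃ is the invertible diagonal operator (C̃ f)_n = ρ_{−n} • f_n and M_x is multiplication by x. (This is the concrete form of the identity R₋ = e^{−T(−D)} ∘ x ∘ e^{T(−D)}, where e^{T_j} = ρ_j.) -/
/-! Every operator involved is diagonal in the monomial basis except multiplication by `x`, which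
shifts indices by one. Diagonal operators form a commutative algebra, the image of `ℤ → R`, so
`G(−β D)` is the diagonal operator with entries `G(−β n)`, and commuting `x` past a diagonal
operator shifts its entries. Hence `C̃⁻¹ x C̃` is `x` preceded by the diagonal with entries
`ρ_{1−n} / ρ_{−n} = γ G((1 − n) β)`, which are the entries of `γ G(−β D)` shifted by one. -/

open Polynomial

/-- The diagonal operator `(C̃ f)_n = d n • f_n` on formal Laurent series. -/
noncomputable def diagOp (R : Type*) [CommRing R] (d : ℤ → R) :
    Module.End R (LaurentSeries R) where
  toFun f :=
    { coeff := fun n => d n * f.coeff n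
      isPWO_support' := f.isPWO_support'.mono (fun n hn => by
        simp only [Function.mem_support, ne_eq] at hn ⊢
        exact fun h => hn (by rw [h, mul_zero])) }
  map_add' f g := by
    ext n
    simp [mul_add]
  map_smul' r f := by
    ext n
    simp only [HahnSeries.coeff_smul, RingHom.id_apply, smul_eq_mul]
    ring

section DiagonalOperators

variable {R : Type*} [CommRing R]

@[simp]
lemma diagOp_coeff (d : ℤ → R) (f : LaurentSeries R) (n : ℤ) :
    (diagOp R d f).coeff n = d n * f.coeff n := rfl

lemma diagOp_one : diagOp R 1 = 1 := by
  ext f n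
  simp

lemma diagOp_mul (d e : ℤ → R) : diagOp R (d * e) = diagOp R d * diagOp R e := by
  ext f n
  simp [mul_assoc]

lemma diagOp_comp_diagOp (d e : ℤ → R) :
    diagOp R d ∘ₗ diagOp R e = diagOp R (fun n => d n * e n) :=
  (diagOp_mul d e).symm

variable (R) in
noncomputable def diagOpAlgHom : (ℤ → R) →ₐ[R] Module.End R (LaurentSeries R) where
  toFun := diagOp R
  map_one' := diagOp_one
  map_mul' := diagOp_mul
  map_zero' := by ext; simp
  map_add' d e := by ext; simp [add_mul]
  commutes' r := by ext; simp

lemma aeval_diagOp (d : ℤ → R) (G : R[X]) :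
    aeval (diagOp R d) G = diagOp R (fun n => G.eval (d n)) := by
  rw [show diagOp R d = diagOpAlgHom R d from rfl, aeval_algHom_apply]
  exact congrArg (diagOp R) (by funext n; simp)

lemma eulerD_eq_diagOp : eulerD R = diagOp R (fun n => (n : R)) := by
  ext f n
  simp [eulerD, zsmul_eq_mul]

lemma smul_diagOp (c : R) (d : ℤ → R) : c • diagOp R d = diagOp R (c • d) :=
  (map_smul (diagOpAlgHom R) c d).symm

lemma mulX_coeff (f : LaurentSeries R) (n : ℤ) : (mulX R f).coeff n = f.coeff (n - 1) := by
  show (HahnSeries.single 1 1 * f).coeff n = _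
  simpa using HahnSeries.coeff_single_mul_add (r := 1) (x := f) (a := n - 1) (b := 1)

lemma mulX_comp_diagOp (d : ℤ → R) :
    mulX R ∘ₗ diagOp R d = diagOp R (fun n => d (n - 1)) ∘ₗ mulX R := by
  ext f n
  simp [mulX_coeff]

lemma diagOp_units_comp_diagOp_inv (u : ℤ → Rˣ) :
    diagOp R (fun n => (u n : R)) ∘ₗ diagOp R (fun n => ((u n)⁻¹ : Rˣ)) = LinearMap.id := by
  rw [diagOp_comp_diagOp, ← Module.End.one_eq_id, ← diagOp_one]
  congr with n
  simp

lemma diagOp_inv_comp_diagOp_units (u : ℤ → Rˣ) :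
    diagOp R (fun n => ((u n)⁻¹ : Rˣ)) ∘ₗ diagOp R (fun n => (u n : R)) = LinearMap.id := by
  simpa using diagOp_units_comp_diagOp_inv (fun n => (u n)⁻¹)

lemma diagOp_inv_comp_mulX_comp_diagOp_units (u : ℤ → Rˣ) :
    diagOp R (fun n => ((u n)⁻¹ : Rˣ)) ∘ₗ mulX R ∘ₗ diagOp R (fun n => (u n : R)) =
      diagOp R (fun n => ((u n)⁻¹ : Rˣ) * u (n - 1)) ∘ₗ mulX R := by
  rw [mulX_comp_diagOp, ← LinearMap.comp_assoc, diagOp_comp_diagOp]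

lemma Rminus_eq_diagOp_comp_mulX (β γ : R) (G : R[X]) :
    Rminus R β γ G = diagOp R (fun n => γ * G.eval (-β * (n - 1))) ∘ₗ mulX R := by
  rw [Rminus, eulerD_eq_diagOp, smul_diagOp, aeval_diagOp, mulX_comp_diagOp,
    ← LinearMap.smul_comp, smul_diagOp]
  congr with n
  simp

end DiagonalOperators

theorem Rminus_conjugation_general (R : Type*) [CommRing R] (β γ : R) (G : Polynomial R)
    (ρ : ℤ → Rˣ)
    (hρ : ∀ n : ℤ, (ρ n : R) = γ * G.eval ((n : R) * β) * (ρ (n - 1) : R)) :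
    diagOp R (fun n => (ρ (-n) : R)) ∘ₗ diagOp R (fun n => (((ρ (-n))⁻¹ : Rˣ) : R)) =
        LinearMap.id ∧
    diagOp R (fun n => (((ρ (-n))⁻¹ : Rˣ) : R)) ∘ₗ diagOp R (fun n => (ρ (-n) : R)) =
        LinearMap.id ∧
    Rminus R β γ G =
      diagOp R (fun n => (((ρ (-n))⁻¹ : Rˣ) : R)) ∘ₗ mulX R ∘ₗ
        diagOp R (fun n => (ρ (-n) : R)) := by
  refine ⟨diagOp_units_comp_diagOp_inv (fun n => ρ (-n)),
    diagOp_inv_comp_diagOp_units (fun n => ρ (-n)), ?_⟩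
  rw [Rminus_eq_diagOp_comp_mulX, diagOp_inv_comp_mulX_comp_diagOp_units (fun n => ρ (-n))]
  congr with n
  have hstep : (ρ (-(n - 1)) : R) = γ * G.eval (-β * (n - 1)) * ρ (-n) := by
    rw [show -(n - 1) = 1 - n by ring, hρ]
    push_cast
    ring_nf
  rw [hstep]
  linear_combination -(γ * G.eval (-β * (n - 1))) * Units.inv_mul (ρ (-n))

/-- `R₋ = C̃⁻¹ ∘ M_x ∘ C̃`, where `C̃` is the invertible diagonal operator
`(C̃ f)_n = ρ_{−n} • f_n`. -/
theorem Rminus_conjugation (R : Type*) [CommRing R] (β γ : R) (G : Polynomial R)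
    (hG : G.coeff 0 = 1)
    (ρ : ℤ → Rˣ) (hρ0 : ρ 0 = 1)
    (hρ : ∀ n : ℤ, (ρ n : R) = γ * G.eval ((n : R) * β) * (ρ (n - 1) : R)) :
    diagOp R (fun n => (ρ (-n) : R)) ∘ₗ diagOp R (fun n => (((ρ (-n))⁻¹ : Rˣ) : R)) =
        LinearMap.id ∧
    diagOp R (fun n => (((ρ (-n))⁻¹ : Rˣ) : R)) ∘ₗ diagOp R (fun n => (ρ (-n) : R)) =
        LinearMap.id ∧
    Rminus R β γ G =
      diagOp R (fun n => (((ρ (-n))⁻¹ : Rˣ) : R)) ∘ₗ mulX R ∘ₗ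
        diagOp R (fun n => (ρ (-n) : R)) :=
  Rminus_conjugation_general R β γ G ρ hρ
end
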